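/- Let A₁, A₂ be n×n complex matrices. Then there exist n×n complex matrices B₁, B₂ with A₁B₁ + A₂B₂ = I and A₁B₂ + A₂B₁ = 0 if and only if det [[A₁,A₂],[A₂,A₁]] ≠ 0 (determinant of the 2n×2n block matrix). -/
import Mathlib

open Matrix

theorem stmt_18 (n : ℕ) (A₁ A₂ : Matrix (Fin n) (Fin n) ℂ) :
    (∃ B₁ B₂ : Matrix (Fin n) (Fin n) ℂ,
        A₁ * B₁ + A₂ * B₂ = 1 ∧ A₁ * B₂ + A₂ * B₁ = 0)
      ↔ (Matrix.fromBlocks A₁ A₂ A₂ A₁).det ≠ 0 := by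
  constructor
  · rintro ⟨B₁, B₂, h1, h2⟩
    have hmul : (fromBlocks A₁ A₂ A₂ A₁) * (fromBlocks B₁ B₂ B₂ B₁) = 1 := by
      rw [Matrix.fromBlocks_multiply, h1, h2, add_comm (A₂ * B₁) (A₁ * B₂), h2,
        add_comm (A₂ * B₂) (A₁ * B₁), h1, ← Matrix.fromBlocks_one]
    intro h0
    have := congrArg Matrix.det hmul
    rw [Matrix.det_mul, h0, zero_mul] at this
    simp at this
  · intro h
    set M := fromBlocks A₁ A₂ A₂ A₁ with hM
    have hinv : M * M⁻¹ = 1 := Matrix.mul_nonsing_inv M h.isUnit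
    set C := (M⁻¹).toBlocks₁₁
    set D := (M⁻¹).toBlocks₁₂
    set E := (M⁻¹).toBlocks₂₁
    set F := (M⁻¹).toBlocks₂₂
    have hN : M⁻¹ = fromBlocks C D E F := (Matrix.fromBlocks_toBlocks _).symm
    rw [hN, hM, Matrix.fromBlocks_multiply, ← Matrix.fromBlocks_one] at hinv
    have e11 : A₁ * C + A₂ * E = 1 := congrArg Matrix.toBlocks₁₁ hinv
    have e12 : A₁ * D + A₂ * F = 0 := congrArg Matrix.toBlocks₁₂ hinv
    have e21 : A₂ * C + A₁ * E = 0 := congrArg Matrix.toBlocks₂₁ hinv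
    have e22 : A₂ * D + A₁ * F = 1 := congrArg Matrix.toBlocks₂₂ hinv
    refine ⟨(2⁻¹ : ℂ) • (C + F), (2⁻¹ : ℂ) • (D + E), ?_, ?_⟩
    · have : A₁ * ((2⁻¹ : ℂ) • (C + F)) + A₂ * ((2⁻¹ : ℂ) • (D + E))
          = (2⁻¹ : ℂ) • ((A₁ * C + A₂ * E) + (A₂ * D + A₁ * F)) := by
        simp [Matrix.mul_smul, mul_add, smul_add]
        abel
      rw [this, e11, e22]
      rw [smul_add, ← add_smul]
      norm_num
    · have : A₁ * ((2⁻¹ : ℂ) • (D + E)) + A₂ * ((2⁻¹ : ℂ) • (C + F))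
          = (2⁻¹ : ℂ) • ((A₁ * D + A₂ * F) + (A₂ * C + A₁ * E)) := by
        simp [Matrix.mul_smul, mul_add, smul_add]
        abel
      rw [this, e12, e21]
      rw [smul_add, ← add_smul]
      norm_num
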